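/- arXiv:math/0501028 — 4 statements merged into one kernel-verified Lean document; each statement's English description precedes it below -/
import Mathlib

section
/- If 0 is not exponentially recurrent, i.e., a_E = 0 where a_E = sup{t ≥ 0 : E[e^{tE}·1_{E<∞}] < ∞}, and b = -log P(E < ∞), then J_E(t) = b for all t ≥ m_E and g(δ) := δ·J_E(1/δ) = bδ for all δ ∈ (0, 1/m_E], where m_E = E[E | E < ∞] (assumed finite) and J_E(t) = sup_{x ≤ 0}(tx - log E[e^{xE}·1_{E<∞}]) ∨ (0·t - log P(E<∞)). -/
open MeasureTheory Real Filter
open scoped ENNReal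

/-- Non-exponentially-recurrent case: if `E` takes values in `{1,2,...} ∪ {∞}`,
`M_E(x) = E[e^{xE} 1_{E<∞}]` is infinite for every `x > 0`, `b = -log P(E < ∞) > 0`,
and `m_E = E[E | E < ∞] < ∞`, then with `J_E(t) = sup_{x ≤ 0} (t x - log M_E(x))`
we have `J_E(t) = b` for all `t ≥ m_E` and `δ · J_E(1/δ) = b · δ` for `δ ∈ (0, 1/m_E]`. -/
theorem stmt_5 {Ω : Type*} [MeasurableSpace Ω] (P : Measure Ω) [IsProbabilityMeasure P]
    (E : Ω → ℕ∞) (hE : Measurable E) (hpos : ∀ ω, 1 ≤ E ω)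
    (A : Set Ω) (hA : A = {ω | E ω ≠ ⊤})
    (hApos : 0 < (P A).toReal) (hAlt : (P A).toReal < 1)
    (M : ℝ → ℝ)
    (hM : ∀ x : ℝ, M x = ∫ ω in A, Real.exp (x * ((E ω).toNat : ℝ)) ∂P)
    (hMint : IntegrableOn (fun ω => ((E ω).toNat : ℝ)) A P)
    (hnoexp : ∀ x : ℝ, 0 < x →
      ¬ IntegrableOn (fun ω => Real.exp (x * ((E ω).toNat : ℝ))) A P)
    (b : ℝ) (hb : b = - Real.log (P A).toReal)
    (m : ℝ) (hm : m = (∫ ω in A, ((E ω).toNat : ℝ) ∂P) / (P A).toReal)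
    (J : ℝ → ℝ)
    (hJ : ∀ t : ℝ, J t = sSup {y : ℝ | ∃ x : ℝ, x ≤ 0 ∧ y = t * x - Real.log (M x)}) :
    (∀ t : ℝ, m ≤ t → J t = b) ∧
    (∀ δ ∈ Set.Ioc (0 : ℝ) (1 / m), δ * J (1 / δ) = b * δ) := by
  set pA := (P A).toReal with hpA
  have hmeas : Measurable (fun ω => ((E ω).toNat : ℝ)) :=
    (measurable_of_countable (fun n : ℕ∞ => (n.toNat : ℝ))).comp hE
  have hAmeas : MeasurableSet A := by
    rw [hA]
    exact (hE (measurableSet_singleton ⊤)).compl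
  have hintE : ∫ ω in A, ((E ω).toNat : ℝ) ∂P = m * pA := by
    rw [hm]; field_simp
  -- key lower bound on M via the tangent-line inequality for exp (Jensen)
  have hkey : ∀ x : ℝ, x ≤ 0 → pA * Real.exp (x * m) ≤ M x := by
    intro x hx
    rw [hM x]
    have e1 : (fun ω => Real.exp (x * m) * (1 + x * (((E ω).toNat : ℝ) - m)))
        = fun ω => Real.exp (x * m) * (1 - x * m)
            + (Real.exp (x * m) * x) * ((E ω).toNat : ℝ) := by
      funext ω; ring
    have hint1 : IntegrableOn (fun ω => Real.exp (x * ((E ω).toNat : ℝ))) A P := by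
      apply Integrable.mono' (integrable_const (1 : ℝ))
        ((hmeas.const_mul x).exp.aestronglyMeasurable.restrict)
      filter_upwards with ω
      rw [Real.norm_eq_abs, abs_of_pos (Real.exp_pos _)]
      have hle : x * ((E ω).toNat : ℝ) ≤ 0 :=
        mul_nonpos_of_nonpos_of_nonneg hx (Nat.cast_nonneg _)
      calc Real.exp (x * ((E ω).toNat : ℝ)) ≤ Real.exp 0 := Real.exp_le_exp.mpr hle
        _ = 1 := Real.exp_zero
    have hint2 : IntegrableOn
        (fun ω => Real.exp (x * m) * (1 + x * (((E ω).toNat : ℝ) - m))) A P := by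
      rw [IntegrableOn, e1]
      exact (integrable_const _).add (hMint.const_mul _)
    have hptwise : ∀ ω ∈ A,
        Real.exp (x * m) * (1 + x * (((E ω).toNat : ℝ) - m)) ≤
          Real.exp (x * ((E ω).toNat : ℝ)) := by
      intro ω _
      have h1 : 1 + x * (((E ω).toNat : ℝ) - m) ≤
          Real.exp (x * (((E ω).toNat : ℝ) - m)) := by
        have := Real.add_one_le_exp (x * (((E ω).toNat : ℝ) - m))
        linarith
      calc Real.exp (x * m) * (1 + x * (((E ω).toNat : ℝ) - m))
          ≤ Real.exp (x * m) * Real.exp (x * (((E ω).toNat : ℝ) - m)) :=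
            mul_le_mul_of_nonneg_left h1 (Real.exp_pos _).le
        _ = Real.exp (x * ((E ω).toNat : ℝ)) := by
            rw [← Real.exp_add]; ring_nf
    have hmono := setIntegral_mono_on hint2 hint1 hAmeas hptwise
    have hcomp : ∫ ω in A, Real.exp (x * m) * (1 + x * (((E ω).toNat : ℝ) - m)) ∂P
        = pA * Real.exp (x * m) := by
      rw [e1, integral_add (integrable_const _) (hMint.const_mul _),
        integral_const, integral_const_mul, hintE]
      simp only [Measure.restrict_apply_univ, measureReal_restrict_apply_univ, measureReal_def, smul_eq_mul, ← hpA]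
      ring
    linarith [hmono, hcomp.symm.le]
  have hM0 : M 0 = pA := by
    rw [hM 0]
    simp [Measure.restrict_apply_univ, hpA, measureReal_def]
  -- part 1
  have part1 : ∀ t : ℝ, m ≤ t → J t = b := by
    intro t ht
    rw [hJ t]
    have hbmem : b ∈ {y : ℝ | ∃ x : ℝ, x ≤ 0 ∧ y = t * x - Real.log (M x)} :=
      ⟨0, le_refl 0, by rw [hM0, hb]; ring⟩
    have hub : ∀ y ∈ {y : ℝ | ∃ x : ℝ, x ≤ 0 ∧ y = t * x - Real.log (M x)}, y ≤ b := by
      rintro y ⟨x, hx, rfl⟩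
      have hlog : Real.log pA + x * m ≤ Real.log (M x) := by
        have := Real.log_le_log (mul_pos hApos (Real.exp_pos (x * m))) (hkey x hx)
        rwa [Real.log_mul hApos.ne' (Real.exp_pos _).ne', Real.log_exp] at this
      have hxm : t * x ≤ m * x := by nlinarith
      rw [hb]
      nlinarith
    exact le_antisymm (csSup_le ⟨b, hbmem⟩ hub) (le_csSup ⟨b, hub⟩ hbmem)
  refine ⟨part1, ?_⟩
  -- m ≥ 1 > 0
  have hmpos : 0 < m := by
    have h1 : ∀ ω ∈ A, (1 : ℝ) ≤ ((E ω).toNat : ℝ) := by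
      intro ω hω
      rw [hA, Set.mem_setOf_eq] at hω
      have hEω := hpos ω
      have h0 : (E ω).toNat ≠ 0 := by
        simp only [ne_eq, ENat.toNat_eq_zero]
        push_neg
        exact ⟨by rintro h'; rw [h'] at hEω; simp at hEω, hω⟩
      have : 1 ≤ (E ω).toNat := Nat.one_le_iff_ne_zero.mpr h0
      exact_mod_cast this
    have hle := setIntegral_mono_on (integrable_const 1) hMint hAmeas h1
    simp only [integral_const, Measure.restrict_apply_univ, measureReal_restrict_apply_univ, measureReal_def, smul_eq_mul, mul_one, ← hpA] at hle
    rw [hm]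
    exact div_pos (lt_of_lt_of_le hApos hle) hApos
  rintro δ ⟨hδ0, hδm⟩
  have h1δ : m ≤ 1 / δ := by
    rw [le_div_iff₀ hδ0]
    calc m * δ ≤ m * (1 / m) := mul_le_mul_of_nonneg_left hδm hmpos.le
      _ = 1 := by field_simp
  rw [part1 (1 / δ) h1δ, mul_comm]
end

section
/- Let f₁, f₂ : ℝ → ℝ be convex functions with f₁(0) = f₂(0) = 0 and f₁'(0) = f₂'(0) < 0. Suppose f₂ attains its infimum at s₂ > 0 with f₂(s₂) = -m < 0, and suppose f₁(x) ≥ f₂(x) - m/2 for all x ∈ [0, s₂']. where s₂' ≥ s₂ is a point with f₂(t) ≥ m for all t > s₂'. Then -inf_x f₁(x) ≤ -f₂(s₂) + m/2 = 3m/2, i.e., inf f₁ ≥ (3/2)·inf f₂. -/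
open Real

/-- Convex comparison: if `f₁, f₂` are convex with `f₁(0) = f₂(0) = 0`,
`f₁'(0) = f₂'(0) < 0`, `f₂` attains its infimum `-m < 0` at `s₂ > 0`,
`f₂(t) ≥ m` for all `t > s₂'` where `s₂' ≥ s₂`, and `f₁ ≥ f₂ - m/2` on `[0, s₂']`,
then `f₁ ≥ -3m/2` everywhere, i.e. `inf f₁ ≥ (3/2) · inf f₂`. -/
theorem stmt_9 (f₁ f₂ : ℝ → ℝ) (m s₂ s₂' : ℝ)
    (hconv1 : ConvexOn ℝ Set.univ f₁) (hconv2 : ConvexOn ℝ Set.univ f₂)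
    (hdiff1 : DifferentiableAt ℝ f₁ 0) (hdiff2 : DifferentiableAt ℝ f₂ 0)
    (h10 : f₁ 0 = 0) (h20 : f₂ 0 = 0)
    (hder : deriv f₁ 0 = deriv f₂ 0) (hderneg : deriv f₂ 0 < 0)
    (hm : 0 < m) (hs₂ : 0 < s₂) (hmin : f₂ s₂ = -m) (hinf : ∀ x : ℝ, f₂ s₂ ≤ f₂ x)
    (hs₂' : s₂ ≤ s₂') (htail : ∀ t : ℝ, s₂' < t → m ≤ f₂ t)
    (hcomp : ∀ x ∈ Set.Icc (0 : ℝ) s₂', f₂ x - m / 2 ≤ f₁ x) :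
    ∀ x : ℝ, -(3 * m / 2) ≤ f₁ x := by
  have hs₂'pos : 0 < s₂' := lt_of_lt_of_le hs₂ hs₂'
  -- continuity of f₂
  have hcont : Continuous f₂ := by
    rw [← continuousOn_univ]
    exact hconv2.continuousOn isOpen_univ
  -- f₂ s₂' ≥ m by continuity from the right
  have hf2s₂' : m ≤ f₂ s₂' := by
    have ht : Filter.Tendsto f₂ (nhdsWithin s₂' (Set.Ioi s₂')) (nhds (f₂ s₂')) :=
      (hcont.continuousAt.tendsto).mono_left nhdsWithin_le_nhds
    refine ge_of_tendsto ht ?_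
    filter_upwards [self_mem_nhdsWithin] with t ht'
    exact htail t ht'
  have hf1s₂' : m / 2 ≤ f₁ s₂' := by
    have := hcomp s₂' ⟨hs₂'pos.le, le_refl _⟩
    linarith
  intro x
  rcases lt_trichotomy x 0 with hx | hx | hx
  · -- x < 0 : tangent line at 0
    have hslope : slope f₁ x 0 ≤ deriv f₁ 0 :=
      hconv1.slope_le_deriv (Set.mem_univ x) (Set.mem_univ 0) hx hdiff1
    rw [slope_def_field, h10] at hslope
    have h0 : (0 : ℝ) - f₁ x ≤ deriv f₁ 0 * (0 - x) := by
      have hxpos : (0 : ℝ) < 0 - x := by linarith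
      exact (div_le_iff₀ hxpos).mp hslope
    nlinarith [mul_pos (neg_pos.mpr (hder ▸ hderneg)) (neg_pos.mpr hx)]
  · subst hx; rw [h10]; nlinarith
  · rcases le_or_gt x s₂' with hx' | hx'
    · -- 0 < x ≤ s₂'
      have := hcomp x ⟨hx.le, hx'⟩
      have := hinf x
      rw [hmin] at this
      linarith
    · -- x > s₂' : slopes increase
      have hsl := hconv1.slope_mono_adjacent (Set.mem_univ (0:ℝ)) (Set.mem_univ x)
        hs₂'pos hx'
      rw [h10] at hsl
      have hxs : 0 < x - s₂' := by linarith
      have hlhs : 0 < (f₁ s₂' - 0) / (s₂' - 0) := div_pos (by linarith) (by linarith)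
      have hrhs := lt_of_lt_of_le hlhs hsl
      have h2 : 0 < f₁ x - f₁ s₂' := by
        have := mul_pos hrhs hxs
        rwa [div_mul_cancel₀ _ (by linarith : x - s₂' ≠ 0)] at this
      linarith
end

section
/- If V is a real random variable with E[e^{tV}] < ∞ for some t > 0, then there exist functions a(θ) with a(θ) → 0 as θ → 0⁺ and q(θ) > 0 for all θ > 0 such that for i.i.d. copies V₁,...,Vₙ of V, the sum Yₙ(θ) of the ⌈θn⌉ largest values among |V₁|,...,|Vₙ| satisfies P(Yₙ(θ) > a(θ)n) ≤ e^{-q(θ)n} for all sufficiently large n. -/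
open MeasureTheory ProbabilityTheory Real Filter
open scoped Topology

/-- If `V₁, V₂, ...` are i.i.d. with `E[e^{t|V₁|}] < ∞` for some `t > 0`, then there are
`a(θ) → 0` as `θ → 0⁺` and `q(θ) > 0` such that the sum `Yₙ(θ)` of the `⌈θn⌉` largest
values among `|V₁|,...,|Vₙ|` satisfies `P(Yₙ(θ) > a(θ) n) ≤ e^{-q(θ) n}` for all large `n`.
(Here `Yₙ(θ) > a(θ)n` iff some `⌈θn⌉`-subset of indices has `|V|`-sum exceeding `a(θ)n`.) -/
theorem stmt_12 {Ω : Type*} [MeasurableSpace Ω] (P : Measure Ω) [IsProbabilityMeasure P]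
    (V : ℕ → Ω → ℝ) (hmeas : ∀ i, Measurable (V i))
    (hindep : iIndepFun V P)
    (hident : ∀ i, IdentDistrib (V i) (V 0) P P)
    (hexp : ∃ t > 0, Integrable (fun ω => Real.exp (t * |V 0 ω|)) P) :
    ∃ a q : ℝ → ℝ, Tendsto a (𝓝[>] 0) (𝓝 0) ∧ (∀ θ : ℝ, 0 < θ → 0 < q θ) ∧
      ∀ θ ∈ Set.Ioc (0 : ℝ) 1, ∀ᶠ n : ℕ in atTop,
        (P {ω | ∃ S : Finset ℕ, S ⊆ Finset.range n ∧ S.card = ⌈θ * n⌉₊ ∧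
            a θ * n < ∑ i ∈ S, |V i ω|}).toReal ≤ Real.exp (-(q θ) * n) := by
  classical
  obtain ⟨t, ht, hint⟩ := hexp
  set g : ℝ → ℝ → ℝ := fun θ v => max (|v| - 1 / Real.sqrt θ) 0 with hgdef
  have hgmeas : ∀ θ : ℝ, Measurable (g θ) := fun θ =>
    (measurable_abs.sub measurable_const).max measurable_const
  have hg0 : ∀ (θ : ℝ) v, 0 ≤ g θ v := fun θ v => le_max_right _ _
  have hMnn : ∀ θ : ℝ, 0 ≤ 1 / Real.sqrt θ := fun θ => by positivity
  have hgle : ∀ (θ : ℝ) v, g θ v ≤ |v| := by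
    intro θ v
    have h1 := hMnn θ
    have h2 := abs_nonneg v
    simp only [hgdef]
    apply max_le <;> linarith
  have hinti : ∀ i, Integrable (fun ω => Real.exp (t * |V i ω|)) P := by
    intro i
    exact (((hident i).comp
      (measurable_exp.comp (measurable_const.mul measurable_abs))).integrable_iff).mpr hint
  have hWint : ∀ (θ : ℝ) i, Integrable (fun ω => Real.exp (t * g θ (V i ω))) P := by
    intro θ i
    refine (hinti i).mono
      ((measurable_exp.comp (measurable_const.mul
        ((hgmeas θ).comp (hmeas i)))).aestronglyMeasurable) ?_
    refine Filter.Eventually.of_forall fun ω => ?_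
    rw [Real.norm_eq_abs, Real.norm_eq_abs, abs_of_pos (Real.exp_pos _),
      abs_of_pos (Real.exp_pos _)]
    exact Real.exp_le_exp.mpr (mul_le_mul_of_nonneg_left (hgle θ _) ht.le)
  set h : ℝ → ℝ := fun θ => ∫ ω, Real.exp (t * g θ (V 0 ω)) ∂P with hhdef
  have hmgfW : ∀ (θ : ℝ) (i : ℕ), mgf (fun ω => g θ (V i ω)) P t = h θ := by
    intro θ i
    exact ((hident i).comp (measurable_exp.comp
      (measurable_const.mul (hgmeas θ)))).integral_eq
  have hh1 : ∀ θ : ℝ, 1 ≤ h θ := by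
    intro θ
    have hmono := integral_mono (integrable_const (1 : ℝ)) (hWint θ 0)
      (fun ω => by
        have hnn : 0 ≤ t * g θ (V 0 ω) := mul_nonneg ht.le (hg0 θ _)
        simpa using Real.one_le_exp hnn)
    simpa using hmono
  have hhpos : ∀ θ : ℝ, 0 < h θ := fun θ => lt_of_lt_of_le one_pos (hh1 θ)
  have hsqrt0 : Tendsto Real.sqrt (𝓝[>] (0 : ℝ)) (𝓝[>] (0 : ℝ)) := by
    apply tendsto_nhdsWithin_of_tendsto_nhds_of_eventually_within
    · exact (Real.continuous_sqrt.tendsto' 0 0 Real.sqrt_zero).mono_left nhdsWithin_le_nhds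
    · filter_upwards [self_mem_nhdsWithin] with θ hθ
      exact Real.sqrt_pos.mpr hθ
  have hsqrtTop : Tendsto (fun θ : ℝ => 1 / Real.sqrt θ) (𝓝[>] (0 : ℝ)) atTop := by
    simpa [one_div, Pi.inv_def] using hsqrt0.inv_tendsto_nhdsGT_zero
  have hh_tendsto : Tendsto h (𝓝[>] (0 : ℝ)) (𝓝 1) := by
    have key : Tendsto (fun θ : ℝ => ∫ ω, Real.exp (t * g θ (V 0 ω)) ∂P)
        (𝓝[>] (0 : ℝ)) (𝓝 (∫ _ω, (1 : ℝ) ∂P)) := by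
      apply tendsto_integral_filter_of_dominated_convergence
        (fun ω => Real.exp (t * |V 0 ω|))
      · exact Filter.Eventually.of_forall fun θ =>
          (measurable_exp.comp (measurable_const.mul
            ((hgmeas θ).comp (hmeas 0)))).aestronglyMeasurable
      · refine Filter.Eventually.of_forall fun θ => Filter.Eventually.of_forall fun ω => ?_
        rw [Real.norm_eq_abs, abs_of_pos (Real.exp_pos _)]
        exact Real.exp_le_exp.mpr (mul_le_mul_of_nonneg_left (hgle θ _) ht.le)
      · exact hint
      · refine Filter.Eventually.of_forall fun ω => ?_
        have hev : (fun θ : ℝ => Real.exp (t * g θ (V 0 ω))) =ᶠ[𝓝[>] (0 : ℝ)]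
            fun _ => (1 : ℝ) := by
          filter_upwards [hsqrtTop.eventually_ge_atTop (|V 0 ω|)] with θ hθ
          have hz : g θ (V 0 ω) = 0 := max_eq_right (by linarith)
          simp [hz]
        exact Tendsto.congr' hev.symm tendsto_const_nhds
    simpa using key
  refine ⟨fun θ => 2 * Real.sqrt θ + 2 / t * Real.log (h θ) + θ, fun θ => t * θ, ?_, ?_, ?_⟩
  · have h1 : Tendsto (fun θ : ℝ => Real.sqrt θ) (𝓝[>] (0 : ℝ)) (𝓝 0) :=
      (Real.continuous_sqrt.tendsto' 0 0 Real.sqrt_zero).mono_left nhdsWithin_le_nhds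
    have h2 : Tendsto (fun θ : ℝ => Real.log (h θ)) (𝓝[>] (0 : ℝ)) (𝓝 0) := by
      have := ((Real.continuousAt_log one_ne_zero).tendsto).comp hh_tendsto
      simpa [Function.comp_def] using this
    have h3 : Tendsto (fun θ : ℝ => θ) (𝓝[>] (0 : ℝ)) (𝓝 0) :=
      tendsto_id.mono_right nhdsWithin_le_nhds
    have := ((h1.const_mul 2).add (h2.const_mul (2 / t))).add h3
    simpa [mul_comm] using this
  · exact fun θ hθ => mul_pos ht hθ
  · rintro θ ⟨hθ0, hθ1⟩
    have hL0 : 0 ≤ Real.log (h θ) := Real.log_nonneg (hh1 θ)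
    have hθM : θ * (1 / Real.sqrt θ) = Real.sqrt θ := by
      rw [mul_one_div, Real.div_sqrt]
    have hWindep : iIndepFun
        (fun i ω => g θ (V i ω)) P :=
      hindep.comp (fun _ => g θ) (fun _ => hgmeas θ)
    filter_upwards [eventually_ge_atTop (max 1 ⌈1 / θ⌉₊)] with n hn
    have hn0 : (0 : ℝ) ≤ n := Nat.cast_nonneg n
    have hnθ : 1 ≤ θ * n := by
      have h1 : (⌈1 / θ⌉₊ : ℝ) ≤ n := Nat.cast_le.mpr (le_trans (le_max_right _ _) hn)
      have h2 : 1 / θ ≤ (⌈1 / θ⌉₊ : ℝ) := Nat.le_ceil _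
      have h3 : 1 / θ ≤ (n : ℝ) := le_trans h2 h1
      calc (1 : ℝ) = θ * (1 / θ) := by field_simp
        _ ≤ θ * n := by nlinarith
    set ε := 2 / t * Real.log (h θ) + θ with hεdef
    have hsub : {ω | ∃ S : Finset ℕ, S ⊆ Finset.range n ∧ S.card = ⌈θ * n⌉₊ ∧
        (2 * Real.sqrt θ + 2 / t * Real.log (h θ) + θ) * n < ∑ i ∈ S, |V i ω|} ⊆
        {ω | ε * n ≤ (∑ i ∈ Finset.range n, fun ω' => g θ (V i ω')) ω} := by
      rintro ω ⟨S, hS, hcard, hsum⟩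
      simp only [Set.mem_setOf_eq, Finset.sum_apply]
      have hb1 : ∑ i ∈ S, |V i ω| ≤
          ∑ i ∈ S, g θ (V i ω) + (⌈θ * n⌉₊ : ℝ) * (1 / Real.sqrt θ) := by
        have hb : ∑ i ∈ S, |V i ω| ≤ ∑ i ∈ S, (g θ (V i ω) + 1 / Real.sqrt θ) := by
          refine Finset.sum_le_sum fun i _ => ?_
          have := le_max_left (|V i ω| - 1 / Real.sqrt θ) 0
          simp only [hgdef]
          linarith
        rwa [Finset.sum_add_distrib, Finset.sum_const, hcard, nsmul_eq_mul] at hb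
      have hb2 : ∑ i ∈ S, g θ (V i ω) ≤ ∑ i ∈ Finset.range n, g θ (V i ω) :=
        Finset.sum_le_sum_of_subset_of_nonneg hS fun i _ _ => hg0 θ _
      have hceil : (⌈θ * n⌉₊ : ℝ) ≤ 2 * (θ * n) := by
        have := Nat.ceil_lt_add_one (by positivity : (0 : ℝ) ≤ θ * n)
        linarith
      have hcardM : (⌈θ * n⌉₊ : ℝ) * (1 / Real.sqrt θ) ≤ 2 * Real.sqrt θ * n := by
        calc (⌈θ * n⌉₊ : ℝ) * (1 / Real.sqrt θ) ≤ 2 * (θ * n) * (1 / Real.sqrt θ) :=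
              mul_le_mul_of_nonneg_right hceil (hMnn θ)
          _ = 2 * (θ * (1 / Real.sqrt θ)) * n := by ring
          _ = 2 * Real.sqrt θ * n := by rw [hθM]
      have hεn : ε * n ≤ ∑ i ∈ Finset.range n, g θ (V i ω) := by
        have : (2 * Real.sqrt θ + 2 / t * Real.log (h θ) + θ) * n
            = 2 * Real.sqrt θ * n + ε * n := by rw [hεdef]; ring
        rw [this] at hsum
        linarith
      exact hεn
    have hintsum : Integrable
        (fun ω => Real.exp (t * (∑ i ∈ Finset.range n, fun ω' => g θ (V i ω')) ω)) P :=
      hWindep.integrable_exp_mul_sum (fun i => (hgmeas θ).comp (hmeas i))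
        (fun i _ => hWint θ i)
    have hchern := measure_ge_le_exp_mul_mgf (μ := P)
      (X := ∑ i ∈ Finset.range n, fun ω => g θ (V i ω)) (ε * n) ht.le hintsum
    have hmgfsum : mgf (∑ i ∈ Finset.range n, fun ω => g θ (V i ω)) P t = h θ ^ n := by
      rw [hWindep.mgf_sum (fun i => (hgmeas θ).comp (hmeas i)) (Finset.range n)]
      rw [Finset.prod_congr rfl (fun i _ => hmgfW θ i), Finset.prod_const,
        Finset.card_range]
    calc (P {ω | ∃ S : Finset ℕ, S ⊆ Finset.range n ∧ S.card = ⌈θ * n⌉₊ ∧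
            (2 * Real.sqrt θ + 2 / t * Real.log (h θ) + θ) * n < ∑ i ∈ S, |V i ω|}).toReal
        ≤ (P {ω | ε * n ≤ (∑ i ∈ Finset.range n, fun ω' => g θ (V i ω')) ω}).toReal :=
          ENNReal.toReal_mono (measure_ne_top P _) (measure_mono hsub)
      _ ≤ Real.exp (-t * (ε * n)) * h θ ^ n := by rw [← hmgfsum]; exact hchern
      _ ≤ Real.exp (-(t * θ) * n) := by
          rw [← Real.exp_log (hhpos θ), ← Real.exp_nat_mul, ← Real.exp_add]
          apply Real.exp_le_exp.mpr
          have htε : t * ε = 2 * Real.log (h θ) + t * θ := by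
            rw [hεdef]; field_simp
          have hkey : -t * (ε * n) + n * Real.log (h θ)
              = -(t * θ) * n - n * Real.log (h θ) := by
            have h2 : -t * (ε * (n : ℝ)) = -(t * ε) * n := by ring
            rw [h2, htε]; ring
          rw [hkey]
          have := mul_nonneg hn0 hL0
          linarith
end

section
/- Suppose p : [0,∞) → (0,∞) is strictly decreasing, w : [0,∞) → (0,∞) is strictly increasing with Σ_{k≥1} 1/w(k) < ∞, and V is a nonnegative random variable with E[(ζ∘p∘w)^{-1}(εV)] = ∞ for all ε > 0, where ζ(x) = log(1/x). If additionally P(E = k) ≥ p(k) for all sufficiently large k for some random variable E on the positive integers, then for every ε > 0 there exists a sequence nⱼ → ∞ with p(nⱼ) ≥ exp(-ε·Ḡ_V^{-1}(1/nⱼ)) for all j, where Ḡ_V^{-1}(t) = sup{x ≥ 0 : P(V ≥ x) ≥ t}. -/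
open MeasureTheory Real
open scoped ENNReal

private noncomputable def stmt15AuxSeq (f : ℕ → ℕ) (w : ℝ → ℝ) : ℕ → ℕ
  | 0 => f 1
  | (j + 1) => f ⌊w ((stmt15AuxSeq f w j : ℕ) : ℝ)⌋₊

/-- If `p` is strictly decreasing and positive, `w` strictly increasing and positive with
`Σ 1/w(k) < ∞`, `V ≥ 0` satisfies `E[(ζ∘p∘w)⁻¹(εV)] = ∞` for all `ε > 0` (with
`ζ(x) = log(1/x)` and generalized inverses), and `P(E = k) ≥ p(k)` for all large `k`,
then for every `ε > 0` there is a sequence `nⱼ → ∞` with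
`p(nⱼ) ≥ exp(-ε Ḡ_V⁻¹(1/nⱼ))`, where `Ḡ_V⁻¹(t) = sup {x ≥ 0 : P(V ≥ x) ≥ t}`. -/
theorem stmt_15 {Ω Ω' : Type*} [MeasurableSpace Ω] [MeasurableSpace Ω']
    (P : Measure Ω) [IsProbabilityMeasure P] (P' : Measure Ω') [IsProbabilityMeasure P']
    (p w : ℝ → ℝ)
    (hp : StrictAntiOn p (Set.Ici 0)) (hppos : ∀ x : ℝ, 0 ≤ x → 0 < p x)
    (hw : StrictMonoOn w (Set.Ici 0)) (hwpos : ∀ x : ℝ, 0 ≤ x → 0 < w x)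
    (hwsum : Summable (fun k : ℕ => 1 / w k))
    (V : Ω → ℝ) (hVmeas : Measurable V) (hVpos : ∀ ω, 0 ≤ V ω)
    (inv : ℝ → ℝ)
    (hinv : ∀ y : ℝ, inv y = sSup {x : ℝ | 0 ≤ x ∧ Real.log (1 / p (w x)) ≤ y})
    (hinfinite : ∀ ε : ℝ, 0 < ε → ∫⁻ ω, ENNReal.ofReal (inv (ε * V ω)) ∂P = ⊤)
    (E : Ω' → ℕ) (hEmeas : Measurable E)
    (hEp : ∃ K : ℕ, ∀ k : ℕ, K ≤ k → p k ≤ (P' {ω | E ω = k}).toReal)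
    (GVinv : ℝ → ℝ)
    (hGVinv : ∀ t : ℝ, GVinv t = sSup {x : ℝ | 0 ≤ x ∧ t ≤ (P {ω | x ≤ V ω}).toReal}) :
    ∀ ε : ℝ, 0 < ε → ∃ n : ℕ → ℕ, StrictMono n ∧ (∀ j, 1 ≤ n j) ∧
      ∀ j : ℕ, Real.exp (-ε * GVinv (1 / (n j : ℝ))) ≤ p (n j) := by
  intro ε hε
  obtain ⟨K, hK⟩ := hEp
  set g : ℕ → ℝ := fun k => Real.log (1 / p (w k)) with hg
  set A : ℕ → Set Ω := fun k => {ω | g k / ε ≤ V ω} with hA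
  have hAmeas : ∀ k, MeasurableSet (A k) := fun k => hVmeas measurableSet_Ici
  -- key inversion lemma
  have keyinv : ∀ (y : ℝ) (k : ℕ), (k : ℝ) < inv y → g k ≤ y := by
    intro y k hk
    rw [hinv] at hk
    set S := {x : ℝ | 0 ≤ x ∧ Real.log (1 / p (w x)) ≤ y} with hS
    have hSne : S.Nonempty := by
      by_contra h
      rw [Set.not_nonempty_iff_eq_empty] at h
      rw [h, Real.sSup_empty] at hk
      exact absurd hk (not_lt.2 (Nat.cast_nonneg k))
    have hSbdd : BddAbove S := by
      by_contra h
      rw [Real.sSup_of_not_bddAbove h] at hk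
      exact absurd hk (not_lt.2 (Nat.cast_nonneg k))
    obtain ⟨x, hxS, hkx⟩ := exists_lt_of_lt_csSup hSne hk
    have hx0 : (0:ℝ) ≤ x := hxS.1
    have hk0 : (0:ℝ) ≤ (k:ℝ) := Nat.cast_nonneg k
    have hwle : w (k:ℝ) ≤ w x := hw.monotoneOn hk0 hx0 hkx.le
    have hple : p (w x) ≤ p (w (k:ℝ)) :=
      hp.antitoneOn (Set.mem_Ici.2 (hwpos _ hk0).le) (Set.mem_Ici.2 (hwpos _ hx0).le) hwle
    have h1 : 1 / p (w (k:ℝ)) ≤ 1 / p (w x) :=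
      one_div_le_one_div_of_le (hppos _ (hwpos _ hx0).le) hple
    calc g k ≤ Real.log (1 / p (w x)) := Real.log_le_log (one_div_pos.2 (hppos _ (hwpos _ hk0).le)) h1
      _ ≤ y := hxS.2
  -- pointwise bound
  have claim1 : ∀ ω, ENNReal.ofReal (inv (ε * V ω)) ≤
      ∑' k : ℕ, (A k).indicator (fun _ => (1:ℝ≥0∞)) ω := by
    intro ω
    rcases le_or_gt (inv (ε * V ω)) 0 with h | h
    · rw [ENNReal.ofReal_eq_zero.2 h]; exact zero_le
    · have hmem : ∀ k : ℕ, k < ⌈inv (ε * V ω)⌉₊ → ω ∈ A k := by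
        intro k hk
        have hlt : (k:ℝ) < inv (ε * V ω) := Nat.lt_ceil.1 hk
        have hgk := keyinv _ k hlt
        exact Set.mem_setOf.2 ((div_le_iff₀' hε).2 hgk)
      calc ENNReal.ofReal (inv (ε * V ω))
          ≤ ENNReal.ofReal ((⌈inv (ε * V ω)⌉₊ : ℝ)) :=
            ENNReal.ofReal_le_ofReal (Nat.le_ceil _)
        _ = ((⌈inv (ε * V ω)⌉₊ : ℕ) : ℝ≥0∞) := ENNReal.ofReal_natCast _
        _ = ∑ k ∈ Finset.range ⌈inv (ε * V ω)⌉₊, (A k).indicator (fun _ => (1:ℝ≥0∞)) ω := by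
            rw [Finset.sum_congr rfl (fun k hk =>
              Set.indicator_of_mem (hmem k (Finset.mem_range.1 hk)) _)]
            simp
        _ ≤ ∑' k : ℕ, (A k).indicator (fun _ => (1:ℝ≥0∞)) ω := ENNReal.sum_le_tsum _
  -- the sum of measures is infinite
  have hsum_top : ∑' k : ℕ, P (A k) = ⊤ := by
    have h1 : (⊤:ℝ≥0∞) ≤ ∫⁻ ω, ∑' k : ℕ, (A k).indicator (fun _ => (1:ℝ≥0∞)) ω ∂P := by
      rw [← hinfinite ε hε]; exact lintegral_mono claim1
    rw [lintegral_tsum (fun k => (measurable_const.indicator (hAmeas k)).aemeasurable)] at h1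
    have h2 : ∀ k : ℕ, ∫⁻ ω, (A k).indicator (fun _ => (1:ℝ≥0∞)) ω ∂P = P (A k) := by
      intro k
      exact lintegral_indicator_one (hAmeas k)
    rw [top_le_iff] at h1
    rw [← h1]
    exact tsum_congr fun k => (h2 k).symm
  -- w tends to infinity
  have hwtop : Filter.Tendsto (fun k : ℕ => w k) Filter.atTop Filter.atTop := by
    have hw0 : Filter.Tendsto (fun k : ℕ => 1 / w k) Filter.atTop (nhds 0) :=
      hwsum.tendsto_atTop_zero
    rw [Filter.tendsto_atTop]
    intro M
    have hM : (0:ℝ) < max M 1 := lt_of_lt_of_le one_pos (le_max_right _ _)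
    have hev : ∀ᶠ k : ℕ in Filter.atTop, 1 / w k < 1 / max M 1 :=
      hw0.eventually (gt_mem_nhds (by positivity))
    filter_upwards [hev] with k hk
    have hwk : (0:ℝ) < w k := hwpos _ (Nat.cast_nonneg k)
    have := lt_of_one_div_lt_one_div hwk hk
    exact le_trans (le_max_left M 1) this.le
  -- threshold K₀
  obtain ⟨K₀, hK₀⟩ : ∃ K₀ : ℕ, ∀ k : ℕ, K₀ ≤ k → max 2 (K:ℝ) ≤ w k :=
    Filter.eventually_atTop.1 (hwtop.eventually_ge_atTop _)
  have hp1 : ∀ k : ℕ, K₀ ≤ k → p (w k) ≤ 1 := by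
    intro k hk
    have h1 : (K:ℝ) ≤ w k := le_trans (le_max_right _ _) (hK₀ k hk)
    have hKr : (0:ℝ) ≤ (K:ℝ) := Nat.cast_nonneg K
    have h2 : p (w k) ≤ p K :=
      hp.antitoneOn (Set.mem_Ici.2 hKr) (Set.mem_Ici.2 (le_trans hKr h1)) h1
    have h3 := hK K le_rfl
    have h4 : (P' {ω | E ω = K}).toReal ≤ 1 := by
      have := ENNReal.toReal_mono ENNReal.one_ne_top (prob_le_one (μ := P') (s := {ω | E ω = K}))
      simpa using this
    linarith
  have hfl2 : ∀ k : ℕ, K₀ ≤ k → w k / 2 ≤ (⌊w k⌋₊ : ℝ) ∧ (2:ℝ) ≤ w k := by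
    intro k hk
    have h2 : (2:ℝ) ≤ w k := le_trans (le_max_left _ _) (hK₀ k hk)
    have := Nat.sub_one_lt_floor (w k)
    constructor
    · linarith
    · exact h2
  -- infinitely many good k
  have hinf : ∀ Kk : ℕ, ∃ k, Kk ≤ k ∧ K₀ ≤ k ∧ 1 / ((⌊w k⌋₊ : ℕ) : ℝ) ≤ (P (A k)).toReal := by
    intro Kk
    by_contra hcon
    push_neg at hcon
    set K' := max Kk K₀ with hK'
    have hge : ∀ i : ℕ, K' ≤ i → (P (A i)).toReal < 1 / ((⌊w i⌋₊ : ℕ) : ℝ) := by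
      intro i hi
      exact hcon i (le_trans (le_max_left _ _) hi) (le_trans (le_max_right _ _) hi)
    -- real comparison sequence
    set f2 : ℕ → ℝ := fun k => if k < K' then 0 else 1 / ((⌊w k⌋₊ : ℕ) : ℝ) with hf2def
    have hf2sum : Summable f2 := by
      refine Summable.of_nonneg_of_le (fun k => ?_) (fun k => ?_) (hwsum.mul_left 2)
      · rw [hf2def]; dsimp only; split <;> positivity
      · rw [hf2def]; dsimp only
        split
        · have : (0:ℝ) < w k := hwpos _ (Nat.cast_nonneg k)
          positivity
        · rename_i hik
          have hik' : K₀ ≤ k := le_trans (le_max_right _ _) (not_lt.1 hik)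
          obtain ⟨hfl, h2⟩ := hfl2 k hik'
          have hwk : (0:ℝ) < w k := hwpos _ (Nat.cast_nonneg k)
          have hhalf : (0:ℝ) < w k / 2 := by positivity
          calc 1 / ((⌊w k⌋₊ : ℕ) : ℝ) ≤ 1 / (w k / 2) := one_div_le_one_div_of_le hhalf hfl
            _ = 2 * (1 / w k) := by field_simp
    -- split bound in ℝ≥0∞
    have hsplit : ∀ k : ℕ, P (A k) ≤
        (if k < K' then P (A k) else 0) + ENNReal.ofReal (f2 k) := by
      intro k
      by_cases hk : k < K'
      · simp [hk]
      · rw [if_neg hk, zero_add, hf2def]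
        dsimp only
        rw [if_neg hk]
        exact le_of_lt ((ENNReal.lt_ofReal_iff_toReal_lt (measure_ne_top _ _)).2
          (hge k (not_lt.1 hk)))
    have hle : ∑' k : ℕ, P (A k) ≤
        (∑' k : ℕ, (if k < K' then P (A k) else 0)) + ∑' k : ℕ, ENNReal.ofReal (f2 k) := by
      rw [← ENNReal.tsum_add]
      exact ENNReal.tsum_le_tsum hsplit
    have h1fin : (∑' k : ℕ, (if k < K' then P (A k) else 0)) ≠ ⊤ := by
      rw [tsum_eq_sum (s := Finset.range K') (fun k hk => if_neg (by simpa using hk))]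
      refine (ENNReal.sum_lt_top.2 fun a _ => ?_).ne
      split
      · exact measure_lt_top _ _
      · exact ENNReal.zero_lt_top
    have h2fin : (∑' k : ℕ, ENNReal.ofReal (f2 k)) ≠ ⊤ := by
      rw [← ENNReal.ofReal_tsum_of_nonneg (fun k => by
        rw [hf2def]; dsimp only; split <;> positivity) hf2sum]
      exact ENNReal.ofReal_ne_top
    have : ∑' k : ℕ, P (A k) ≠ ⊤ :=
      ne_top_of_le_ne_top (ENNReal.add_ne_top.2 ⟨h1fin, h2fin⟩) hle
    exact this hsum_top
  -- strengthen: floor grows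
  have hinf' : ∀ M : ℕ, ∃ k, K₀ ≤ k ∧ M < ⌊w k⌋₊ ∧
      1 / ((⌊w k⌋₊ : ℕ) : ℝ) ≤ (P (A k)).toReal := by
    intro M
    obtain ⟨K₁, hK₁⟩ := Filter.eventually_atTop.1 (hwtop.eventually_ge_atTop ((M:ℝ) + 1))
    obtain ⟨k, hk1, hk2, hk3⟩ := hinf K₁
    refine ⟨k, hk2, ?_, hk3⟩
    have h1 := hK₁ k hk1
    have h2 : (M + 1 : ℕ) ≤ ⌊w k⌋₊ := Nat.le_floor (by push_cast; linarith)
    omega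
  choose f hf1 hf2 hf3 using hinf'
  -- recursive sequence
  set ks : ℕ → ℕ := stmt15AuxSeq f w with hksdef
  have hkrec : ∀ j, ks (j + 1) = f ⌊w (ks j : ℝ)⌋₊ := fun j => rfl
  have hkf : ∀ j, ∃ M, 1 ≤ M ∧ ks j = f M := by
    intro j
    induction j with
    | zero => exact ⟨1, le_rfl, rfl⟩
    | succ i ih =>
      refine ⟨⌊w (ks i : ℝ)⌋₊, ?_, hkrec i⟩
      obtain ⟨M, hM1, hM2⟩ := ih
      rw [hM2]
      have := hf2 M
      omega
  refine ⟨fun j => ⌊w (ks j : ℝ)⌋₊, ?_, ?_, ?_⟩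
  · apply strictMono_nat_of_lt_succ
    intro j
    have h := hf2 ⌊w (ks j : ℝ)⌋₊
    rw [← hkrec j] at h
    exact h
  · intro j
    dsimp only
    obtain ⟨M, hM1, hM2⟩ := hkf j
    rw [hM2]
    have := hf2 M
    omega
  · intro j
    dsimp only
    obtain ⟨M, hM1, hM2⟩ := hkf j
    set m := ks j with hm
    have hmK₀ : K₀ ≤ m := by rw [hM2]; exact hf1 M
    have hPA : 1 / ((⌊w m⌋₊ : ℕ) : ℝ) ≤ (P (A m)).toReal := by rw [hM2]; exact hf3 M
    have hfl : 1 ≤ ⌊w m⌋₊ := by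
      rw [hM2]; have := hf2 M; omega
    have hnpos : (0:ℝ) < ((⌊w m⌋₊ : ℕ) : ℝ) := by exact_mod_cast hfl
    have hwm0 : (0:ℝ) ≤ w m := (hwpos _ (Nat.cast_nonneg m)).le
    -- bounded above
    have hbdd : BddAbove {x : ℝ | 0 ≤ x ∧ 1 / ((⌊w m⌋₊ : ℕ) : ℝ) ≤ (P {ω | x ≤ V ω}).toReal} := by
      set Sm : ℕ → Set Ω := fun q => {ω | (q:ℝ) ≤ V ω} with hSm
      have hSmmeas : ∀ q, NullMeasurableSet (Sm q) P :=
        fun q => (hVmeas measurableSet_Ici).nullMeasurableSet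
      have hSmanti : Antitone Sm := by
        intro a b hab ω hω
        exact le_trans ((Nat.cast_le (α := ℝ)).2 hab) hω
      have hSmempty : ⋂ q, Sm q = ∅ := by
        ext ω
        simp only [Set.mem_iInter, Set.mem_empty_iff_false, iff_false, not_forall]
        obtain ⟨q, hq⟩ := exists_nat_gt (V ω)
        exact ⟨q, by simp [hSm]; exact hq⟩
      have htend : Filter.Tendsto (fun q => P (Sm q)) Filter.atTop (nhds 0) := by
        have := tendsto_measure_iInter_atTop hSmmeas hSmanti ⟨0, measure_ne_top _ _⟩
        rwa [hSmempty, measure_empty] at this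
      have hev : ∀ᶠ q : ℕ in Filter.atTop,
          P (Sm q) < ENNReal.ofReal (1 / ((⌊w m⌋₊ : ℕ) : ℝ)) :=
        htend.eventually (gt_mem_nhds (ENNReal.ofReal_pos.2 (by positivity)))
      obtain ⟨m₀, hm₀⟩ := hev.exists
      refine ⟨m₀, fun x hx => ?_⟩
      by_contra hgt
      push_neg at hgt
      have hsub : {ω | x ≤ V ω} ⊆ Sm m₀ := fun ω h => le_trans hgt.le h
      have h1 : (P {ω | x ≤ V ω}).toReal ≤ (P (Sm m₀)).toReal :=
        ENNReal.toReal_mono (measure_ne_top _ _) (measure_mono hsub)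
      have h2 : (P (Sm m₀)).toReal < 1 / ((⌊w m⌋₊ : ℕ) : ℝ) :=
        ENNReal.toReal_lt_of_lt_ofReal hm₀
      linarith [hx.2]
    have hgm0 : 0 ≤ g m := by
      apply Real.log_nonneg
      rw [le_div_iff₀ (hppos _ hwm0)]
      linarith [hp1 m hmK₀]
    have hGV : g m / ε ≤ GVinv (1 / ((⌊w m⌋₊ : ℕ) : ℝ)) := by
      rw [hGVinv]
      exact le_csSup hbdd ⟨by positivity, hPA⟩
    calc Real.exp (-ε * GVinv (1 / ((⌊w m⌋₊ : ℕ) : ℝ)))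
        ≤ Real.exp (-ε * (g m / ε)) := by
          apply Real.exp_le_exp.2
          nlinarith [hGV]
      _ = Real.exp (-(g m)) := by
          rw [neg_mul, mul_div_cancel₀ _ (ne_of_gt hε)]
      _ = p (w m) := by
          rw [hg]
          dsimp only
          rw [Real.log_div one_ne_zero (ne_of_gt (hppos _ hwm0)), Real.log_one, zero_sub, neg_neg,
            Real.exp_log (hppos _ hwm0)]
      _ ≤ p ((⌊w m⌋₊ : ℕ) : ℝ) := by
          apply hp.antitoneOn (Set.mem_Ici.2 (Nat.cast_nonneg _)) (Set.mem_Ici.2 hwm0)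
          exact Nat.floor_le hwm0
end
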